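/- arXiv:math/0505276 — 4 statements merged into one kernel-verified Lean document; each statement's English description precedes it below -/
import Mathlib

section
/- Let E ⊆ ℝ^m be measurable with positive upper Banach density, and let φ(u) = min(1, dist(u, E)). If S_n is a sequence of cubes with m(S_n ∩ E)/m(S_n) → D̄(E) > 0, and μ is any weak* limit of the measures μ_n(f) = (1/m(S_n)) ∫_{S_n} f(T_v φ) dv on the orbit-closure space X⁰ of φ, then for every natural number l, ∫_X (1 − f₀(ψ))^l dμ(ψ) ≥ D̄(E), where f₀(ψ) = ψ(0). Consequently μ(Ẽ) ≥ D̄(E) > 0, where Ẽ = {ψ ∈ X⁰ : ψ(0) = 0}. -/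
/-!
On the cube `S_n` the function `v ↦ (1 - φ v)^l` is nonnegative and equals `1` on `E`, so its
average is at least the relative density of `E` in `S_n`. After clipping `ψ 0` to `[0, 1]`
(which changes nothing on the orbit closure, where `ψ 0 ∈ [0, 1]`) the functional
`ψ ↦ (1 - ψ 0)^l` is bounded and continuous, so these averages converge to its `μ`-integral,
which is therefore at least `D`. Letting `l → ∞`, dominated convergence turns `(1 - ψ 0)^l`
into the indicator of `{ψ 0 = 0}`.
-/

open MeasureTheory Filter

/-- The Borel σ-algebra on the space of continuous functions on `ℝ^m` (with the compact-open
topology, i.e. uniform convergence on bounded sets). -/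
noncomputable instance (m : ℕ) : MeasurableSpace C(Fin m → ℝ, ℝ) := borel _

open Set Topology

instance (m : ℕ) : BorelSpace C(Fin m → ℝ, ℝ) := ⟨rfl⟩

lemma one_sub_pow_mem_Icc {x : ℝ} (hx : x ∈ Icc (0 : ℝ) 1) (k : ℕ) :
    (1 - x) ^ k ∈ Icc (0 : ℝ) 1 :=
  ⟨pow_nonneg (by linarith [hx.2]) k, pow_le_one₀ (by linarith [hx.2]) (by linarith [hx.1])⟩

lemma tendsto_one_sub_pow_indicator {x : ℝ} (hx : x ∈ Icc (0 : ℝ) 1) :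
    Tendsto (fun k : ℕ => (1 - x) ^ k) atTop (𝓝 (({0} : Set ℝ).indicator 1 x)) := by
  rcases eq_or_lt_of_le hx.1 with rfl | hpos
  · simp
  · rw [indicator_of_notMem (show x ∉ ({0} : Set ℝ) from hpos.ne')]
    exact tendsto_pow_atTop_nhds_zero_of_abs_lt_one
      (abs_lt.2 ⟨by linarith [hx.2], by linarith⟩)

lemma tendsto_integral_one_sub_pow {α : Type*} [MeasurableSpace α] {ν : Measure α}
    [IsFiniteMeasure ν] {f : α → ℝ} (hf : Measurable f)
    (hf01 : ∀ᵐ x ∂ν, f x ∈ Icc (0 : ℝ) 1) :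
    Tendsto (fun k : ℕ => ∫ x, (1 - f x) ^ k ∂ν) atTop (𝓝 (ν.real {x | f x = 0})) := by
  have hzero : MeasurableSet {x | f x = 0} := hf (measurableSet_singleton 0)
  rw [← integral_indicator_one hzero]
  refine tendsto_integral_of_dominated_convergence (fun _ => 1)
    (fun k => ((measurable_const.sub hf).pow_const k).aestronglyMeasurable)
    (integrable_const 1) (fun k => ?_) ?_
  · filter_upwards [hf01] with x hx
    obtain ⟨h0, h1⟩ := one_sub_pow_mem_Icc hx k
    rwa [Real.norm_of_nonneg h0]
  · filter_upwards [hf01] with x hx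
    exact tendsto_one_sub_pow_indicator hx

lemma measureReal_inter_le_setIntegral {α : Type*} [MeasurableSpace α] {μ : Measure α}
    {S E : Set α} {h : α → ℝ} (hS : MeasurableSet S) (hE : MeasurableSet E)
    (hint : IntegrableOn h S μ) (h_nonneg : ∀ v ∈ S, 0 ≤ h v)
    (h_one : ∀ v ∈ E, 1 ≤ h v) :
    μ.real (S ∩ E) ≤ ∫ v in S, h v ∂μ := by
  have hindicator : ∫ v in S, E.indicator 1 v ∂μ = μ.real (S ∩ E) := by
    rw [integral_indicator_one hE, measureReal_restrict_apply hE, inter_comm]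
  rw [← hindicator]
  refine integral_mono_of_nonneg (Eventually.of_forall fun v => ?_) hint
    ((ae_restrict_mem hS).mono fun v hv => ?_)
  · exact indicator_nonneg (fun _ _ => zero_le_one) v
  · by_cases hvE : v ∈ E
    · simpa [indicator_of_mem hvE] using h_one v hvE
    · simpa [indicator_of_notMem hvE] using h_nonneg v hv

lemma le_of_tendsto_density_of_tendsto_average {α : Type*} [MeasurableSpace α]
    {μ : Measure α} {S : ℕ → Set α} {E : Set α} {h : α → ℝ} {D L : ℝ}
    (hS : ∀ n, MeasurableSet (S n)) (hE : MeasurableSet E) (hint : ∀ n, IntegrableOn h (S n) μ)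
    (h_nonneg : ∀ v, 0 ≤ h v) (h_one : ∀ v ∈ E, 1 ≤ h v)
    (hdens : Tendsto (fun n => μ.real (S n ∩ E) / μ.real (S n)) atTop (𝓝 D))
    (havg : Tendsto (fun n => (μ.real (S n))⁻¹ * ∫ v in S n, h v ∂μ) atTop (𝓝 L)) :
    D ≤ L :=
  le_of_tendsto_of_tendsto' hdens havg fun n => by
    rw [div_eq_inv_mul]
    exact mul_le_mul_of_nonneg_left
      (measureReal_inter_le_setIntegral (hS n) hE (hint n) (fun v _ => h_nonneg v) h_one)
      (inv_nonneg.2 measureReal_nonneg)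

lemma ae_mem_of_range_subset {X ι : Type*} [TopologicalSpace X] [MeasurableSpace X]
    {μ : Measure X} {F : ι → X} {C : Set X} (hμ : μ (closure (range F))ᶜ = 0)
    (hC : IsClosed C) (hFC : ∀ i, F i ∈ C) : ∀ᵐ x ∂μ, x ∈ C :=
  mem_of_superset (mem_ae_iff.2 hμ) fun _ hx => closure_minimal (range_subset_iff.2 hFC) hC hx

theorem stmt0_general (m : ℕ) (E : Set (Fin m → ℝ)) (hE : MeasurableSet E)
    (φ : C(Fin m → ℝ, ℝ)) (hφ : ∀ u, φ u = min 1 (Metric.infDist u E))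
    (T : (Fin m → ℝ) → C(Fin m → ℝ, ℝ) → C(Fin m → ℝ, ℝ))
    (hT : ∀ v ψ u, T v ψ u = ψ (u + v))
    (S : ℕ → Set (Fin m → ℝ))
    (hS : ∀ n, ∃ a r, 0 < r ∧ S n = Set.Icc a (a + fun _ => r))
    (D : ℝ)
    (hdens : Tendsto (fun n => (volume (S n ∩ E)).toReal / (volume (S n)).toReal)
      atTop (nhds D))
    (μ : Measure C(Fin m → ℝ, ℝ)) [IsProbabilityMeasure μ]
    (hsupp : μ (closure (Set.range fun v => T v φ))ᶜ = 0)
    (hweak : ∀ f : C(Fin m → ℝ, ℝ) → ℝ, Continuous f → (∃ C, ∀ ψ, |f ψ| ≤ C) →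
      Tendsto (fun n => (volume (S n)).toReal⁻¹ * ∫ v in S n, f (T v φ))
        atTop (nhds (∫ ψ, f ψ ∂μ)))
    (l : ℕ) :
    D ≤ ∫ ψ, (1 - ψ 0) ^ l ∂μ ∧
      ENNReal.ofReal D ≤ μ {ψ : C(Fin m → ℝ, ℝ) | ψ 0 = 0} := by
  set clip : ℝ → ℝ := fun x => projIcc (0 : ℝ) 1 zero_le_one x
  have hclip : Continuous clip := continuous_subtype_val.comp continuous_projIcc
  have heval : Continuous fun ψ : C(Fin m → ℝ, ℝ) => ψ 0 := continuous_eval_const 0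
  have hφ01 : ∀ v, φ v ∈ Icc (0 : ℝ) 1 := fun v => by
    rw [hφ v]; exact ⟨le_min zero_le_one Metric.infDist_nonneg, min_le_left _ _⟩
  have hae : ∀ᵐ ψ ∂μ, ψ 0 ∈ Icc (0 : ℝ) 1 :=
    ae_mem_of_range_subset hsupp (isClosed_Icc.preimage heval)
      fun v => show T v φ 0 ∈ Icc (0 : ℝ) 1 by rw [hT, zero_add]; exact hφ01 v
  have key : ∀ k : ℕ, D ≤ ∫ ψ, (1 - ψ 0) ^ k ∂μ := fun k => by
    have hg01 : ∀ x, (1 - clip x) ^ k ∈ Icc (0 : ℝ) 1 :=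
      fun x => one_sub_pow_mem_Icc (projIcc 0 1 zero_le_one x).2 k
    have havg := hweak (fun ψ => (1 - clip (ψ 0)) ^ k)
      ((continuous_const.sub (hclip.comp heval)).pow k)
      ⟨1, fun ψ => abs_le.2 ⟨by linarith [(hg01 (ψ 0)).1], (hg01 (ψ 0)).2⟩⟩
    simp only [hT, zero_add] at havg
    have hunclip :
        (fun ψ : C(Fin m → ℝ, ℝ) => (1 - clip (ψ 0)) ^ k) =ᵐ[μ] fun ψ => (1 - ψ 0) ^ k :=
      hae.mono fun ψ hψ => by simp only [clip, projIcc_of_mem _ hψ]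
    rw [← integral_congr_ae hunclip]
    refine le_of_tendsto_density_of_tendsto_average
      (fun n => by obtain ⟨a, r, -, hSn⟩ := hS n; exact hSn ▸ measurableSet_Icc) hE
      (fun n => ?_) (fun v => (hg01 (φ v)).1) (fun v hv => ?_) hdens havg
    · obtain ⟨a, r, -, hSn⟩ := hS n
      rw [hSn]
      exact ((continuous_const.sub (hclip.comp φ.continuous)).pow k).integrableOn_Icc
    · simp [clip, hφ v, Metric.infDist_zero_of_mem hv]
  refine ⟨key l, ENNReal.ofReal_le_of_le_toReal ?_⟩
  exact ge_of_tendsto' (tendsto_integral_one_sub_pow heval.measurable hae) key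

/-- Furstenberg–Katznelson–Weiss correspondence, first half: if `S_n` are cubes along which the
relative density of `E` tends to `D̄(E) = D > 0` and `μ` is a weak* limit of the orbital
averages `μ_n(f) = (1/m(S_n)) ∫_{S_n} f(T_v φ) dv` (where `φ(u) = min(1, dist(u,E))` and
`T_vψ(u) = ψ(u+v)`), then `∫ (1−f₀(ψ))^l dμ ≥ D` for all `l`, and hence
`μ(Ẽ) ≥ D > 0` for `Ẽ = {ψ : ψ(0) = 0}`. -/
theorem stmt0 (m : ℕ) (E : Set (Fin m → ℝ)) (hE : MeasurableSet E)
    (φ : C(Fin m → ℝ, ℝ)) (hφ : ∀ u, φ u = min 1 (Metric.infDist u E))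
    (T : (Fin m → ℝ) → C(Fin m → ℝ, ℝ) → C(Fin m → ℝ, ℝ))
    (hT : ∀ v ψ u, T v ψ u = ψ (u + v))
    (S : ℕ → Set (Fin m → ℝ))
    (hS : ∀ n, ∃ a r, 0 < r ∧ S n = Set.Icc a (a + fun _ => r))
    (D : ℝ) (hD : 0 < D)
    (hdens : Tendsto (fun n => (volume (S n ∩ E)).toReal / (volume (S n)).toReal)
      atTop (nhds D))
    (μ : Measure C(Fin m → ℝ, ℝ)) [IsProbabilityMeasure μ]
    (hsupp : μ (closure (Set.range fun v => T v φ))ᶜ = 0)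
    (hweak : ∀ f : C(Fin m → ℝ, ℝ) → ℝ, Continuous f → (∃ C, ∀ ψ, |f ψ| ≤ C) →
      Tendsto (fun n => (volume (S n)).toReal⁻¹ * ∫ v in S n, f (T v φ))
        atTop (nhds (∫ ψ, f ψ ∂μ)))
    (l : ℕ) :
    D ≤ ∫ ψ, (1 - ψ 0) ^ l ∂μ ∧
      ENNReal.ofReal D ≤ μ {ψ : C(Fin m → ℝ, ℝ) | ψ 0 = 0} :=
  stmt0_general m E hE φ hφ T hT S hS D hdens μ hsupp hweak l
end

section
/- Let E ⊆ ℝ^m, φ(u) = min(1, dist(u,E)), X⁰ the orbit closure of φ with the translation action T_v, μ a translation-limit measure as above, and Ẽ = {ψ ∈ X⁰ : ψ(0) = 0}. If u₁,…,u_l ∈ ℝ^m satisfy μ(Ẽ ∩ T_{u₁}^{-1}Ẽ ∩ ⋯ ∩ T_{u_l}^{-1}Ẽ) > 0, then for every δ > 0 the set E_δ ∩ (E_δ − u₁) ∩ ⋯ ∩ (E_δ − u_l) is nonempty, where E_δ denotes the set of points at distance less than δ from E. -/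
/-!
Test `μ` against the bounded continuous function `f ψ = ∏ₚ max (δ' - |ψ p|) 0`, the product
running over `p ∈ {0, u₁, …, u_l}` and `δ' = min δ 1` (capped because `φ ≤ 1`). It is positive on
`Ẽ ∩ T_{u₁}⁻¹Ẽ ∩ ⋯ ∩ T_{u_l}⁻¹Ẽ`, so `∫ f dμ > 0`. If no `w` had all of `w, w + u₁, …, w + u_l`
in `E_δ`, then every translate `T_w φ` would take a value `≥ δ'` at one of these points, so `f`
would vanish along the whole orbit of `φ`; the averages converging to `∫ f dμ` would all be `0`.
-/

open MeasureTheory Filter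

instance inst_s1 (m : ℕ) : BorelSpace C(Fin m → ℝ, ℝ) := ⟨rfl⟩

noncomputable section

def tent (δ x : ℝ) : ℝ := max (δ - |x|) 0

section Tent

variable {δ x : ℝ}

lemma continuous_tent (δ : ℝ) : Continuous (tent δ) := by
  unfold tent
  fun_prop

lemma tent_nonneg (δ x : ℝ) : 0 ≤ tent δ x := le_max_right _ _

lemma tent_le (hδ : 0 ≤ δ) (x : ℝ) : tent δ x ≤ δ :=
  max_le (sub_le_self δ (abs_nonneg x)) hδ

lemma tent_zero (hδ : 0 ≤ δ) : tent δ 0 = δ := by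
  simp [tent, hδ]

lemma tent_eq_zero_of_le (h : δ ≤ x) : tent δ x = 0 :=
  max_eq_right (by linarith [le_abs_self x])

end Tent

def bump {X : Type*} [TopologicalSpace X] (P : Finset X) (δ : ℝ) (ψ : C(X, ℝ)) : ℝ :=
  ∏ p ∈ P, tent δ (ψ p)

section Bump

variable {X : Type*} [TopologicalSpace X] {P : Finset X} {δ : ℝ} {ψ : C(X, ℝ)}

lemma continuous_bump (P : Finset X) (δ : ℝ) : Continuous (bump P δ) :=
  continuous_finsetProd _ fun p _ => (continuous_tent δ).comp (continuous_eval_const p)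

lemma bump_nonneg (P : Finset X) (δ : ℝ) (ψ : C(X, ℝ)) : 0 ≤ bump P δ ψ :=
  Finset.prod_nonneg fun _ _ => tent_nonneg _ _

lemma bump_le (hδ : 0 ≤ δ) (ψ : C(X, ℝ)) : bump P δ ψ ≤ δ ^ P.card :=
  calc bump P δ ψ ≤ ∏ _p ∈ P, δ :=
        Finset.prod_le_prod (fun _ _ => tent_nonneg _ _) fun _ _ => tent_le hδ _
    _ = δ ^ P.card := Finset.prod_const δ

lemma abs_bump_le (hδ : 0 ≤ δ) (ψ : C(X, ℝ)) : |bump P δ ψ| ≤ δ ^ P.card := by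
  rw [abs_of_nonneg (bump_nonneg P δ ψ)]
  exact bump_le hδ ψ

lemma bump_pos (hδ : 0 < δ) (hψ : ∀ p ∈ P, ψ p = 0) : 0 < bump P δ ψ :=
  Finset.prod_pos fun p hp => by rwa [hψ p hp, tent_zero hδ.le]

lemma bump_eq_zero {p : X} (hp : p ∈ P) (h : δ ≤ ψ p) : bump P δ ψ = 0 :=
  Finset.prod_eq_zero hp (tent_eq_zero_of_le h)

lemma integral_bump_pos [MeasurableSpace C(X, ℝ)] [OpensMeasurableSpace C(X, ℝ)]
    (μ : Measure C(X, ℝ)) [IsFiniteMeasure μ] (hδ : 0 < δ)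
    (hP : 0 < μ {ψ | ∀ p ∈ P, ψ p = 0}) : 0 < ∫ ψ, bump P δ ψ ∂μ := by
  have hint : Integrable (bump P δ) μ :=
    .of_bound (continuous_bump P δ).aestronglyMeasurable (δ ^ P.card)
      (.of_forall fun ψ => abs_bump_le hδ.le ψ)
  rw [integral_pos_iff_support_of_nonneg (bump_nonneg P δ) hint]
  exact hP.trans_le (measure_mono fun ψ hψ => (bump_pos hδ hψ).ne')

end Bump

theorem stmt1_general (m l : ℕ) (E : Set (Fin m → ℝ))
    (φ : C(Fin m → ℝ, ℝ)) (hφ : ∀ u, φ u = min 1 (Metric.infDist u E))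
    (T : (Fin m → ℝ) → C(Fin m → ℝ, ℝ) → C(Fin m → ℝ, ℝ))
    (hT : ∀ v ψ u, T v ψ u = ψ (u + v))
    (S : ℕ → Set (Fin m → ℝ))
    (μ : Measure C(Fin m → ℝ, ℝ)) [IsProbabilityMeasure μ]
    (hweak : ∀ f : C(Fin m → ℝ, ℝ) → ℝ, Continuous f → (∃ C, ∀ ψ, |f ψ| ≤ C) →
      Tendsto (fun n => (volume (S n)).toReal⁻¹ * ∫ v in S n, f (T v φ))
        atTop (nhds (∫ ψ, f ψ ∂μ)))
    (u : Fin l → (Fin m → ℝ))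
    (hpos : 0 < μ ({ψ : C(Fin m → ℝ, ℝ) | ψ 0 = 0} ∩
      ⋂ i, T (u i) ⁻¹' {ψ : C(Fin m → ℝ, ℝ) | ψ 0 = 0}))
    (δ : ℝ) (hδ : 0 < δ) :
    ∃ w : Fin m → ℝ, Metric.infDist w E < δ ∧ ∀ i, Metric.infDist (w + u i) E < δ := by
  by_contra! hnone
  set δ' := min δ 1
  have hδ' : 0 < δ' := lt_min hδ one_pos
  set P : Finset (Fin m → ℝ) := insert 0 (Finset.univ.image u)
  have hφ_ge (w : Fin m → ℝ) (hw : δ ≤ Metric.infDist w E) : δ' ≤ φ w := by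
    rw [hφ]
    exact le_min (min_le_right δ 1) ((min_le_left δ 1).trans hw)
  have horbit (v : Fin m → ℝ) : bump P δ' (T v φ) = 0 := by
    by_cases hv : Metric.infDist v E < δ
    · obtain ⟨i, hi⟩ := hnone v hv
      refine bump_eq_zero (p := u i) (by simp [P]) ?_
      rw [hT, add_comm]
      exact hφ_ge _ hi
    · refine bump_eq_zero (Finset.mem_insert_self 0 _) ?_
      rw [hT, zero_add]
      exact hφ_ge _ (not_lt.mp hv)
  have hlim := hweak (bump P δ') (continuous_bump P δ') ⟨_, abs_bump_le hδ'.le⟩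
  simp only [horbit, integral_zero, mul_zero] at hlim
  have hvanish : {ψ : C(Fin m → ℝ, ℝ) | ψ 0 = 0} ∩
      ⋂ i, T (u i) ⁻¹' {ψ : C(Fin m → ℝ, ℝ) | ψ 0 = 0} ⊆ {ψ | ∀ p ∈ P, ψ p = 0} := by
    intro ψ hψ
    simp_all [P]
  exact (integral_bump_pos μ hδ' (hpos.trans_le (measure_mono hvanish))).ne'
    (tendsto_nhds_unique hlim tendsto_const_nhds)

/-- Furstenberg–Katznelson–Weiss correspondence, second half: with `φ(u) = min(1, dist(u,E))`,
`X⁰` the orbit closure of `φ` under translations `T_v`, `μ` a translation-limit (weak*) measure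
and `Ẽ = {ψ : ψ(0) = 0}`, if `μ(Ẽ ∩ T_{u₁}⁻¹Ẽ ∩ ⋯ ∩ T_{u_l}⁻¹Ẽ) > 0` then for every `δ > 0`
the set `E_δ ∩ (E_δ − u₁) ∩ ⋯ ∩ (E_δ − u_l)` is nonempty. -/
theorem stmt1 (m l : ℕ) (E : Set (Fin m → ℝ))
    (φ : C(Fin m → ℝ, ℝ)) (hφ : ∀ u, φ u = min 1 (Metric.infDist u E))
    (T : (Fin m → ℝ) → C(Fin m → ℝ, ℝ) → C(Fin m → ℝ, ℝ))
    (hT : ∀ v ψ u, T v ψ u = ψ (u + v))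
    (S : ℕ → Set (Fin m → ℝ))
    (hS : ∀ n, ∃ a r, 0 < r ∧ S n = Set.Icc a (a + fun _ => r))
    (μ : Measure C(Fin m → ℝ, ℝ)) [IsProbabilityMeasure μ]
    (hsupp : μ (closure (Set.range fun v => T v φ))ᶜ = 0)
    (hweak : ∀ f : C(Fin m → ℝ, ℝ) → ℝ, Continuous f → (∃ C, ∀ ψ, |f ψ| ≤ C) →
      Tendsto (fun n => (volume (S n)).toReal⁻¹ * ∫ v in S n, f (T v φ))
        atTop (nhds (∫ ψ, f ψ ∂μ)))
    (u : Fin l → (Fin m → ℝ))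
    (hpos : 0 < μ ({ψ : C(Fin m → ℝ, ℝ) | ψ 0 = 0} ∩
      ⋂ i, T (u i) ⁻¹' {ψ : C(Fin m → ℝ, ℝ) | ψ 0 = 0}))
    (δ : ℝ) (hδ : 0 < δ) :
    ∃ w : Fin m → ℝ, Metric.infDist w E < δ ∧ ∀ i, Metric.infDist (w + u i) E < δ :=
  stmt1_general m l E φ hφ T hT S μ hweak u hpos δ hδ
end
end

section
/- Let m ≥ 1 and, for each r ∈ ℕ, let s₁^r, …, s_m^r ∈ ℝ^m with not all s_l^r equal to zero. Let u₁, …, u_k ∈ ℝ^m be nonzero with u_i ≠ u_j for i ≠ j and suppose m ≥ 3. Then there exists an antisymmetric matrix B ∈ M_m(ℝ) such that Bu_i ≠ 0 and B(u_i − u_j) ≠ 0 for all 1 ≤ i, j ≤ k with i ≠ j, and for every r the linear functional f_{r,B}(M) = Σ_{l=1}^m ⟨s_l^r, M B e_l⟩ on M_m(ℝ) is not identically zero, where e₁,…,e_m is the standard basis of ℝ^m. -/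
/-!
Every requirement on `B` has the form `B v ≠ 0` for a nonzero vector `v`: for `v = uᵢ`,
`v = uᵢ - uⱼ`, and, since `f_{r,B}(M) = tr (M B Sᵣ)` where `Sᵣ` has rows `s_l^r`, for a nonzero
column `v` of `Sᵣ`. For each `v` the antisymmetric `B` with `B v = 0` form a proper subspace
(`m ≥ 2`), and a finite-dimensional real space is not a countable union of proper subspaces,
because these are Lebesgue-null.
-/

open MeasureTheory Matrix

theorem Submodule.exists_forall_notMem_of_countable {E ι : Type*} [AddCommGroup E] [Module ℝ E]
    [FiniteDimensional ℝ E] [Countable ι] (S : ι → Submodule ℝ E) (hS : ∀ i, S i ≠ ⊤) :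
    ∃ x, ∀ i, x ∉ S i := by
  let e : E ≃ₗ[ℝ] (Fin (Module.finrank ℝ E) → ℝ) := (Module.finBasis ℝ E).equivFun
  let T i := (S i).map (e : E →ₗ[ℝ] Fin (Module.finrank ℝ E) → ℝ)
  have hnull : volume (⋃ i, (T i : Set (Fin (Module.finrank ℝ E) → ℝ))) = 0 :=
    measure_iUnion_null fun i =>
      Measure.addHaar_submodule volume _ (Submodule.map_eq_top_iff.not.2 (hS i))
  obtain ⟨x, hx⟩ : (⋃ i, (T i : Set (Fin (Module.finrank ℝ E) → ℝ)))ᶜ.Nonempty :=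
    Set.nonempty_compl.2 fun h =>
      isOpen_univ.measure_ne_zero volume Set.univ_nonempty (h ▸ hnull)
  exact ⟨e.symm x, fun i hi => hx (Set.mem_iUnion.2 ⟨i, (Submodule.mem_map_equiv _).2 hi⟩)⟩

namespace Matrix

theorem exists_sub_transpose_mulVec_ne_zero {n R : Type*} [Fintype n] [DecidableEq n]
    [Nontrivial n] [Ring R] {v : n → R} (hv : v ≠ 0) :
    ∃ C : Matrix n n R, (C - Cᵀ) *ᵥ v ≠ 0 := by
  obtain ⟨i, hi⟩ := Function.ne_iff.1 hv
  obtain ⟨j, hji⟩ := exists_ne i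
  refine ⟨single j i 1, fun h => hi ?_⟩
  simpa [sub_mulVec, single_mulVec, hji, Function.update_apply] using congrFun h j

theorem exists_transpose_eq_neg_forall_mulVec_ne_zero {n ι : Type*} [Fintype n]
    [DecidableEq n] [Nontrivial n] [Countable ι] (v : ι → n → ℝ) (hv : ∀ i, v i ≠ 0) :
    ∃ B : Matrix n n ℝ, Bᵀ = -B ∧ ∀ i, B *ᵥ v i ≠ 0 := by
  let L (w : n → ℝ) : Matrix n n ℝ →ₗ[ℝ] n → ℝ := LinearMap.applyₗ w ∘ₗ
    toLin'.toLinearMap ∘ₗ (LinearMap.id - (transposeLinearEquiv n n ℝ ℝ).toLinearMap)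
  have hL (w : n → ℝ) (C : Matrix n n ℝ) : L w C = (C - Cᵀ) *ᵥ w := by
    simp [L, sub_mulVec]
  obtain ⟨C, hC⟩ := Submodule.exists_forall_notMem_of_countable
    (fun i => LinearMap.ker (L (v i))) fun i htop => by
      obtain ⟨C, hC⟩ := exists_sub_transpose_mulVec_ne_zero (hv i)
      have hCker : C ∈ LinearMap.ker (L (v i)) := htop ▸ Submodule.mem_top
      exact hC (by simpa [hL] using hCker)
  refine ⟨C - Cᵀ, by simp, fun i h => hC i ?_⟩
  simpa [hL] using h

theorem sum_dotProduct_mulVec_single_one {m n R : Type*} [Fintype m] [Fintype n]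
    [DecidableEq n] [CommSemiring R] (s : n → m → R) (A : Matrix m n R) :
    ∑ l, s l ⬝ᵥ (A *ᵥ Pi.single l 1) = (A * of s).trace := by
  simp only [mulVec_single_one, dotProduct, trace, diag, mul_apply, of_apply, col_apply]
  rw [Finset.sum_comm]
  simp [mul_comm]

theorem mul_ne_zero_of_mulVec_col_ne_zero {m n o R : Type*} [Fintype n]
    [NonUnitalNonAssocSemiring R] {B : Matrix m n R} {S : Matrix n o R} {a : o}
    (h : B *ᵥ S.col a ≠ 0) : B * S ≠ 0 := fun hBS =>
  h (funext fun b => by simpa [mul_apply, mulVec, dotProduct] using congrFun (congrFun hBS b) a)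

end Matrix

/-- For countably many tuples `(s₁^r,…,s_m^r)`, each not identically zero, and distinct nonzero
vectors `u₁,…,u_k ∈ ℝ^m` (`m ≥ 3`), there is an antisymmetric matrix `B` with `Bu_i ≠ 0`,
`B(u_i − u_j) ≠ 0` for `i ≠ j`, and such that for every `r` the linear functional
`M ↦ Σ_l ⟨s_l^r, M B e_l⟩` is not identically zero. -/
theorem stmt3 (m k : ℕ) (hm : 3 ≤ m)
    (s : ℕ → Fin m → (Fin m → ℝ)) (hs : ∀ r, ∃ l, s r l ≠ 0)
    (u : Fin k → (Fin m → ℝ)) (hu : ∀ i, u i ≠ 0)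
    (huij : ∀ i j, i ≠ j → u i ≠ u j) :
    ∃ B : Matrix (Fin m) (Fin m) ℝ, B.transpose = -B ∧
      (∀ i, B.mulVec (u i) ≠ 0) ∧
      (∀ i j, i ≠ j → B.mulVec (u i - u j) ≠ 0) ∧
      (∀ r, ∃ M : Matrix (Fin m) (Fin m) ℝ,
        ∑ l, dotProduct (s r l) ((M * B).mulVec (Pi.single l 1)) ≠ 0) := by
  have : Nontrivial (Fin m) := Fin.nontrivial_iff_two_le.2 (by omega)
  have hcol (r : ℕ) : ∃ a, (of (s r)).col a ≠ 0 := by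
    obtain ⟨l, hl⟩ := hs r
    obtain ⟨a, ha⟩ := Function.ne_iff.1 hl
    exact ⟨a, fun h => ha (congrFun h l)⟩
  choose a ha using hcol
  obtain ⟨B, hBskew, hB⟩ := exists_transpose_eq_neg_forall_mulVec_ne_zero
    (Sum.elim u (Sum.elim (fun p : {p : Fin k × Fin k // p.1 ≠ p.2} => u p.1.1 - u p.1.2)
      fun r => (of (s r)).col (a r)))
    (by rintro (i | ⟨⟨i, j⟩, hij⟩ | r)
        exacts [hu i, sub_ne_zero.2 (huij i j hij), ha r])
  refine ⟨B, hBskew, fun i => hB (.inl i), fun i j hij => hB (.inr (.inl ⟨(i, j), hij⟩)),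
    fun r => ?_⟩
  obtain ⟨M, hM⟩ : ∃ M, (M * (B * of (s r))).trace ≠ 0 := by
    by_contra! h
    exact mul_ne_zero_of_mulVec_col_ne_zero (hB (.inr (.inr r)))
      (ext_iff_trace_mul_left.2 fun M => by simp [h])
  exact ⟨M, by rwa [sum_dotProduct_mulVec_single_one, Matrix.mul_assoc]⟩
end

section
/- Let m ≥ 3, let S ⊆ M_m(ℝ) be a countably linear set, and let u₁, …, u_k ∈ ℝ^m be distinct nonzero vectors. Assume (X, B, μ, ℝ^m) is an ergodic measure-preserving ℝ^m-action for which, off a countable family of hyperplanes through the origin in ℝ^m, each one-parameter subgroup acts ergodically. Then there exist M ∈ M_m(ℝ) \ S and P ∈ SO(m) such that MᵗP is antisymmetric and the transformations T_{Mu_i} and T_{M(u_i − u_j)} (i ≠ j) are all ergodic. -/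
/-!
Write `M = (1 - K) A (1 - K)` with `K`, `A` skew-symmetric. The Cayley transform
`P = (1 - K)(1 + K)⁻¹` lies in `SO(m)`, and `MᵀP = -(1 + K) A (1 - K)` is skew-symmetric, so every
such pair `(M, P)` has the required shape. The entries of `M` are polynomials in the free
parameters of `K` and `A`, and each way of failing — `M` lying on one of the hyperplanes covering
`S`, or `M v` lying on one of the Pugh–Shub hyperplanes for one of the finitely many `v` — is the
vanishing of a linear functional `N ↦ tr (B N) - c` at `M`, i.e. of a polynomial in the
parameters. A nonzero real polynomial vanishes only on a closed set with empty interior (identity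
theorem), so by Baire some parameter avoids all countably many of them.

The polynomials are nonzero because, for `m ≥ 3`, `tr (B (1 - K) A (1 - K))` cannot vanish for
all skew `K`, `A` unless `B = 0`: otherwise `(1 - K) B (1 - K)` is symmetric for every skew `K`,
which forces `B` to anticommute with all skew matrices.
-/

open MeasureTheory

namespace MvPolynomial

variable {σ 𝕜 : Type*} [Fintype σ] [RCLike 𝕜]

theorem dense_setOf_eval_ne_zero {p : MvPolynomial σ 𝕜} (hp : p ≠ 0) :
    Dense {x : σ → 𝕜 | eval x p ≠ 0} := by
  change Dense {x : σ → 𝕜 | eval x p = 0}ᶜ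
  rw [← interior_eq_empty_iff_dense_compl, Set.eq_empty_iff_forall_notMem]
  intro x₀ hx₀
  have hvanish : (eval · p) =ᶠ[nhds x₀] 0 :=
    Filter.mem_of_superset (mem_interior_iff_mem_nhds.mp hx₀) fun x hx => by simpa using hx
  have hzero := (AnalyticOnNhd.eval_mvPolynomial p).eqOn_zero_of_preconnected_of_eventuallyEq_zero
    isPreconnected_univ (Set.mem_univ x₀) hvanish
  exact hp (funext fun x => by simpa using hzero (Set.mem_univ x))

theorem exists_forall_eval_ne_zero {P : Set (MvPolynomial σ 𝕜)} (hP : P.Countable)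
    (h0 : 0 ∉ P) : ∃ x : σ → 𝕜, ∀ p ∈ P, eval x p ≠ 0 := by
  have hdense := dense_biInter_of_isOpen
    (fun p _ => (isClosed_eq (continuous_eval p) continuous_const).isOpen_compl) hP
    (fun p hp => dense_setOf_eval_ne_zero (ne_of_mem_of_not_mem hp h0))
  obtain ⟨x, hx⟩ := hdense.nonempty
  exact ⟨x, fun p hp => Set.mem_iInter₂.mp hx p hp⟩

end MvPolynomial

namespace Matrix

variable {n : Type*}

section CommRing

variable [Fintype n] {R : Type*} [CommRing R]

theorem trace_vecMulVec_mul (w a : n → R) (N : Matrix n n R) :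
    (vecMulVec w a * N).trace = a ⬝ᵥ N *ᵥ w := by
  rw [vecMulVec_mul, trace_vecMulVec, dotProduct_comm, dotProduct_mulVec]

variable [DecidableEq n]

theorem trace_of_mul (s : n → n → R) (N : Matrix n n R) :
    (of s * N).trace = ∑ l, s l ⬝ᵥ N *ᵥ Pi.single l 1 := by
  simp only [trace, diag, mul_apply, of_apply, mulVec_single_one, dotProduct, col_apply]

theorem isSymm_of_forall_skew_trace_mul_eq_zero {N : Matrix n n R}
    (h : ∀ A : Matrix n n R, Aᵀ = -A → (N * A).trace = 0) : N.IsSymm := by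
  ext i j
  have hA : (single i j (1 : R) - single j i 1)ᵀ = -(single i j 1 - single j i 1) := by
    simp [transpose_single]
  simpa [mul_sub, trace_mul_single, sub_eq_zero] using h _ hA

end CommRing

section Field

variable [Fintype n] [DecidableEq n] {𝕜 : Type*} [Field 𝕜] [CharZero 𝕜]

theorem eq_zero_of_forall_skew_anticommute (hn : 3 ≤ Fintype.card n) {B : Matrix n n 𝕜}
    (h : ∀ K : Matrix n n 𝕜, Kᵀ = -K → K * B + B * K = 0) : B = 0 := by
  have hskew : ∀ i j : n, (single i j (1 : 𝕜) - single j i 1)ᵀ = -(single i j 1 - single j i 1) :=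
    fun i j => by simp [transpose_single]
  have hcomm : ∀ K L : Matrix n n 𝕜, Kᵀ = -K → Lᵀ = -L → Commute (K * L) B := fun K L hK hL => by
    have hKB := h K hK
    have hLB := h L hL
    rw [add_eq_zero_iff_eq_neg] at hKB hLB
    calc K * L * B = K * (L * B) := mul_assoc _ _ _
      _ = B * (K * L) := by rw [hLB, mul_neg, ← mul_assoc, hKB, neg_mul, neg_neg, mul_assoc]
  -- Products of two skew matrices commute with `B`, and with a third index every off-diagonal
  -- matrix unit is such a product, so `B` is scalar.
  obtain ⟨r, rfl⟩ : B ∈ Set.range (scalar n) := by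
    refine mem_range_scalar_of_commute_single fun i l hil => ?_
    obtain ⟨j, hji, hjl⟩ : ∃ j, j ≠ i ∧ j ≠ l :=
      Cardinal.exists_ne_ne_of_three_le (by simpa using hn) i l
    have hunit : (single i j (1 : 𝕜) - single j i 1) * (single j l 1 - single l j 1) =
        single i l 1 := by
      simp [sub_mul, mul_sub, single_mul_single_of_ne, hjl, hil, hji.symm]
    exact hunit ▸ hcomm _ _ (hskew i j) (hskew j l)
  obtain ⟨i, j, -, hij, -⟩ : ∃ i j l : n, i ≠ j ∧ i ≠ l ∧ j ≠ l :=
    Fintype.two_lt_card_iff.mp hn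
  have hr : r = 0 := by simpa [hij, hij.symm] using congr($(h _ (hskew i j)) i j)
  rw [hr, map_zero]

theorem exists_skew_trace_mul_ne_zero (hn : 3 ≤ Fintype.card n) {B : Matrix n n 𝕜}
    (hB : B ≠ 0) :
    ∃ K A : Matrix n n 𝕜, Kᵀ = -K ∧ Aᵀ = -A ∧ (B * ((1 - K) * A * (1 - K))).trace ≠ 0 := by
  by_contra! hzero
  have hsymm : ∀ K : Matrix n n 𝕜, Kᵀ = -K → ((1 - K) * B * (1 - K)).IsSymm :=
    fun K hK => isSymm_of_forall_skew_trace_mul_eq_zero fun A hA => by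
      rw [← hzero K A hK hA, show (1 - K) * B * (1 - K) * A = (1 - K) * (B * (1 - K) * A) by
        simp only [mul_assoc], trace_mul_comm]
      simp only [mul_assoc]
  have hBsymm : Bᵀ = B := by simpa [IsSymm] using hsymm 0 (by simp)
  refine hB (eq_zero_of_forall_skew_anticommute hn fun K hK => ?_)
  have h := hsymm K hK
  rw [IsSymm, transpose_mul, transpose_mul, transpose_sub, transpose_one, hK, hBsymm] at h
  have h2 : (2 : 𝕜) • (K * B + B * K) = 0 := by
    rw [← sub_eq_zero.mpr h, two_smul]
    noncomm_ring
  exact (smul_eq_zero.mp h2).resolve_left two_ne_zero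

end Field

section Cayley

variable [Fintype n]

theorem dotProduct_mulVec_eq_zero_of_transpose_eq_neg {K : Matrix n n ℝ} (hK : Kᵀ = -K)
    (v : n → ℝ) : v ⬝ᵥ K *ᵥ v = 0 := by
  have h : v ⬝ᵥ K *ᵥ v = -(v ⬝ᵥ K *ᵥ v) := by
    conv_lhs => rw [dotProduct_mulVec, ← mulVec_transpose, hK, dotProduct_comm]
    rw [neg_mulVec, dotProduct_neg]
  linarith

variable [DecidableEq n]

theorem isUnit_det_one_add_of_transpose_eq_neg {K : Matrix n n ℝ} (hK : Kᵀ = -K) :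
    IsUnit (1 + K).det := by
  rw [isUnit_iff_ne_zero]
  intro hdet
  obtain ⟨v, hv, hKv⟩ := exists_mulVec_eq_zero_iff.mpr hdet
  have h := congrArg (v ⬝ᵥ ·) hKv
  simp only [add_mulVec, one_mulVec, dotProduct_add,
    dotProduct_mulVec_eq_zero_of_transpose_eq_neg hK, add_zero, dotProduct_zero] at h
  exact hv (dotProduct_self_eq_zero.mp h)

theorem isUnit_det_one_sub_of_transpose_eq_neg {K : Matrix n n ℝ} (hK : Kᵀ = -K) :
    IsUnit (1 - K).det := by
  rw [sub_eq_add_neg]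
  exact isUnit_det_one_add_of_transpose_eq_neg (by rw [transpose_neg, hK])

noncomputable def cayley (K : Matrix n n ℝ) : Matrix n n ℝ := (1 - K) * (1 + K)⁻¹

theorem cayley_mem_specialOrthogonalGroup {K : Matrix n n ℝ} (hK : Kᵀ = -K) :
    cayley K ∈ specialOrthogonalGroup n ℝ := by
  have hplus : (1 + K)ᵀ = 1 - K := by rw [transpose_add, transpose_one, hK, ← sub_eq_add_neg]
  have hcomm : (1 - K) * (1 + K) = (1 + K) * (1 - K) := by noncomm_ring
  have hinv_comm : (1 + K)⁻¹ * (1 - K)⁻¹ = (1 - K)⁻¹ * (1 + K)⁻¹ := by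
    rw [← mul_inv_rev, ← mul_inv_rev, hcomm]
  rw [mem_specialOrthogonalGroup_iff, mem_orthogonalGroup_iff]
  constructor
  · calc cayley K * (cayley K)ᵀ = (1 - K) * ((1 + K)⁻¹ * (1 - K)⁻¹) * (1 + K) := by
          rw [cayley, transpose_mul, transpose_nonsing_inv, hplus, ← transpose_transpose (1 - K),
            transpose_sub, transpose_one, hK, sub_neg_eq_add, transpose_transpose]
          simp only [mul_assoc]
      _ = 1 := by
          rw [hinv_comm, ← mul_assoc, mul_nonsing_inv _ (isUnit_det_one_sub_of_transpose_eq_neg hK),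
            one_mul, nonsing_inv_mul _ (isUnit_det_one_add_of_transpose_eq_neg hK)]
  · rw [cayley, det_mul, det_nonsing_inv, ← det_transpose (1 + K), hplus,
      Ring.mul_inverse_cancel _ (isUnit_det_one_sub_of_transpose_eq_neg hK)]

theorem transpose_mul_cayley {K A : Matrix n n ℝ} (hK : Kᵀ = -K) (hA : Aᵀ = -A) :
    ((1 - K) * A * (1 - K))ᵀ * cayley K = -((1 + K) * A * (1 - K)) := by
  have hminus : (1 - K)ᵀ = 1 + K := by rw [transpose_sub, transpose_one, hK, sub_neg_eq_add]
  have hcomm : (1 + K) * (1 - K) = (1 - K) * (1 + K) := by noncomm_ring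
  rw [transpose_mul, transpose_mul, hminus, hA, cayley]
  calc (1 + K) * (-A * (1 + K)) * ((1 - K) * (1 + K)⁻¹)
      = -((1 + K) * A * ((1 + K) * (1 - K)) * (1 + K)⁻¹) := by noncomm_ring
    _ = -((1 + K) * A * (1 - K)) := by
      rw [hcomm, ← mul_assoc, mul_assoc _ (1 + K),
        mul_nonsing_inv _ (isUnit_det_one_add_of_transpose_eq_neg hK), mul_one]

theorem transpose_mul_cayley_transpose {K A : Matrix n n ℝ} (hK : Kᵀ = -K) (hA : Aᵀ = -A) :
    (((1 - K) * A * (1 - K))ᵀ * cayley K)ᵀ = -(((1 - K) * A * (1 - K))ᵀ * cayley K) := by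
  rw [transpose_mul_cayley hK hA, transpose_neg, transpose_mul, transpose_mul, transpose_sub,
    transpose_add, transpose_one, hK, hA]
  noncomm_ring

end Cayley

section Parametrization

variable {R S : Type*} [CommRing R] [CommRing S]

def skewOf (v : n × n → R) : Matrix n n R :=
  of (Function.curry v) - (of (Function.curry v))ᵀ

theorem transpose_skewOf (v : n × n → R) : (skewOf v)ᵀ = -skewOf v := by
  rw [skewOf, transpose_sub, transpose_transpose, neg_sub]

theorem skewOf_half [Invertible (2 : R)] {K : Matrix n n R} (hK : Kᵀ = -K) :
    skewOf (fun p => ⅟2 * K p.1 p.2) = K := by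
  ext i j
  have hji : K j i = -K i j := by simpa using congr($hK i j)
  simp only [skewOf, sub_apply, transpose_apply, of_apply, Function.curry_apply, hji, mul_neg,
    sub_neg_eq_add, ← add_mul, invOf_two_add_invOf_two, one_mul]

variable [Fintype n] [DecidableEq n]

def skewSandwich (x : n × n ⊕ n × n → R) : Matrix n n R :=
  (1 - skewOf (x ∘ Sum.inl)) * skewOf (x ∘ Sum.inr) * (1 - skewOf (x ∘ Sum.inl))

theorem map_skewSandwich (f : R →+* S) (x : n × n ⊕ n × n → R) :
    (skewSandwich x).map f = skewSandwich (f ∘ x) := by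
  have hskew : ∀ v : n × n → R, (skewOf v).map f = skewOf (f ∘ v) := fun v => by
    ext i j; simp [skewOf]
  simp [skewSandwich, Matrix.map_mul, Matrix.map_sub, hskew, Function.comp_assoc]

theorem exists_skewSandwich_eq [Invertible (2 : R)] {K A : Matrix n n R} (hK : Kᵀ = -K)
    (hA : Aᵀ = -A) : ∃ x : n × n ⊕ n × n → R, skewSandwich x = (1 - K) * A * (1 - K) :=
  ⟨Sum.elim (fun p => ⅟2 * K p.1 p.2) (fun p => ⅟2 * A p.1 p.2), by
    rw [skewSandwich, Sum.elim_comp_inl, Sum.elim_comp_inr, skewOf_half hK, skewOf_half hA]⟩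

noncomputable def traceFormPoly (B : Matrix n n R) (c : R) : MvPolynomial (n × n ⊕ n × n) R :=
  (B.map MvPolynomial.C * skewSandwich MvPolynomial.X).trace - MvPolynomial.C c

theorem eval_traceFormPoly (B : Matrix n n R) (c : R) (x : n × n ⊕ n × n → R) :
    MvPolynomial.eval x (traceFormPoly B c) = (B * skewSandwich x).trace - c := by
  rw [traceFormPoly, map_sub, MvPolynomial.eval_C, AddMonoidHom.map_trace, Matrix.map_mul,
    map_skewSandwich, show ⇑(MvPolynomial.eval x) ∘ MvPolynomial.X = x from
      funext MvPolynomial.eval_X]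
  congr 3
  ext
  simp

theorem traceFormPoly_ne_zero {𝕜 : Type*} [Field 𝕜] [CharZero 𝕜] (hn : 3 ≤ Fintype.card n)
    {B : Matrix n n 𝕜} {c : 𝕜} (h : B ≠ 0 ∨ c ≠ 0) : traceFormPoly B c ≠ 0 := by
  suffices ∃ x, (B * skewSandwich x).trace ≠ c by
    obtain ⟨x, hx⟩ := this
    intro h0
    simpa [eval_traceFormPoly, sub_eq_zero, hx] using congr(MvPolynomial.eval x $h0)
  rcases eq_or_ne c 0 with rfl | hc
  · obtain ⟨K, A, hK, hA, htr⟩ :=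
      exists_skew_trace_mul_ne_zero hn (h.resolve_right (not_not.mpr rfl))
    obtain ⟨x, hx⟩ := exists_skewSandwich_eq hK hA
    exact ⟨x, hx ▸ htr⟩
  · have hzero : skewOf (0 : n × n → 𝕜) = 0 := by ext; simp [skewOf]
    exact ⟨0, by simpa [skewSandwich, Pi.zero_comp, hzero] using hc.symm⟩

theorem exists_skewSandwich_avoiding {𝕜 : Type*} [RCLike 𝕜] (hn : 3 ≤ Fintype.card n)
    {ι κ : Type*} [Countable ι] [Countable κ] (B : ι → Matrix n n 𝕜) (hB : ∀ i, B i ≠ 0)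
    (c : ι → 𝕜) (a : κ → n → 𝕜) (ha : ∀ j, a j ≠ 0) {W : Set (n → 𝕜)} (hW : W.Countable)
    (hW0 : 0 ∉ W) :
    ∃ x, (∀ i, (B i * skewSandwich x).trace ≠ c i) ∧
      ∀ j, ∀ w ∈ W, a j ⬝ᵥ skewSandwich x *ᵥ w ≠ 0 := by
  set P := Set.range (fun i => traceFormPoly (B i) (c i)) ∪
    ⋃ j, (fun w => traceFormPoly (vecMulVec w (a j)) 0) '' W
  have hP : P.Countable :=
    (Set.countable_range _).union (Set.countable_iUnion fun j => hW.image _)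
  have hP0 : 0 ∉ P := by
    rintro (⟨i, hi⟩ | hmem)
    · exact traceFormPoly_ne_zero hn (Or.inl (hB i)) hi
    · obtain ⟨j, w, hw, hw0⟩ := Set.mem_iUnion.mp hmem
      exact traceFormPoly_ne_zero hn
        (Or.inl (vecMulVec_ne_zero (ne_of_mem_of_not_mem hw hW0) (ha j))) hw0
  obtain ⟨x, hx⟩ := MvPolynomial.exists_forall_eval_ne_zero hP hP0
  refine ⟨x, fun i => ?_, fun j w hw => ?_⟩
  · simpa [eval_traceFormPoly, sub_eq_zero] using hx _ (Or.inl ⟨i, rfl⟩)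
  · simpa [eval_traceFormPoly, trace_vecMulVec_mul] using
      hx _ (Or.inr (Set.mem_iUnion.mpr ⟨j, w, hw, rfl⟩))

end Parametrization

end Matrix

open Matrix

theorem stmt6_general (m k : ℕ) (hm : 3 ≤ m)
    {X : Type*} [MeasurableSpace X] (μ : Measure X)
    (T : (Fin m → ℝ) → X → X)
    -- Pugh–Shub: off a countable family of hyperplanes through the origin, `T_v` is ergodic
    (a : ℕ → (Fin m → ℝ)) (ha : ∀ i, a i ≠ 0)
    (hPS : ∀ v : Fin m → ℝ, v ∉ (⋃ i, {w : Fin m → ℝ | dotProduct (a i) w = 0}) →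
      Ergodic (T v) μ)
    -- `S` is countably linear
    (S : Set (Matrix (Fin m) (Fin m) ℝ))
    (s : ℕ → Fin m → (Fin m → ℝ)) (c : ℕ → ℝ) (hs : ∀ r, ∃ l, s r l ≠ 0)
    (hScover : S ⊆ ⋃ r, {N : Matrix (Fin m) (Fin m) ℝ |
      ∑ l, dotProduct (s r l) (N.mulVec (Pi.single l 1)) = c r})
    (u : Fin k → (Fin m → ℝ)) (hu : ∀ i, u i ≠ 0)
    (huij : ∀ i j, i ≠ j → u i ≠ u j) :
    ∃ M P : Matrix (Fin m) (Fin m) ℝ, M ∉ S ∧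
      P ∈ Matrix.specialOrthogonalGroup (Fin m) ℝ ∧
      (M.transpose * P).transpose = -(M.transpose * P) ∧
      (∀ i, Ergodic (T (M.mulVec (u i))) μ) ∧
      (∀ i j, i ≠ j → Ergodic (T (M.mulVec (u i - u j))) μ) := by
  set W := Set.range u ∪ Set.range fun p : {p : Fin k × Fin k // p.1 ≠ p.2} => u p.1.1 - u p.1.2
  have hW0 : 0 ∉ W := by
    rintro (⟨i, hi⟩ | ⟨⟨⟨i, j⟩, hij⟩, hij0⟩)
    · exact hu i hi
    · exact sub_ne_zero.mpr (huij i j hij) hij0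
  obtain ⟨x, hxS, hxPS⟩ := exists_skewSandwich_avoiding (by simpa using hm) (fun r => of (s r))
    (fun r h => (hs r).elim fun l hl => hl congr($h l)) c a ha
    ((Set.countable_range _).union (Set.countable_range _)) hW0
  have herg : ∀ w ∈ W, Ergodic (T (skewSandwich x *ᵥ w)) μ := fun w hw =>
    hPS _ (by simpa using fun i => hxPS i w hw)
  have hK := transpose_skewOf (x ∘ Sum.inl)
  refine ⟨skewSandwich x, cayley (skewOf (x ∘ Sum.inl)), fun hxS' => ?_,
    cayley_mem_specialOrthogonalGroup hK,
    transpose_mul_cayley_transpose hK (transpose_skewOf _),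
    fun i => herg _ (Or.inl ⟨i, rfl⟩), fun i j hij => herg _ (Or.inr ⟨⟨(i, j), hij⟩, rfl⟩)⟩
  obtain ⟨_, ⟨r, rfl⟩, hr⟩ := hScover hxS'
  exact hxS r (by rwa [trace_of_mul])

/-- Given `m ≥ 3`, a countably linear set `S ⊆ M_m(ℝ)`, distinct nonzero vectors
`u₁,…,u_k ∈ ℝ^m`, and an ergodic measure-preserving `ℝ^m`-action for which every vector off a
countable family of hyperplanes through the origin generates an ergodic transformation, there
are `M ∉ S` and `P ∈ SO(m)` with `MᵗP` antisymmetric such that all `T_{Mu_i}` and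
`T_{M(u_i−u_j)}` (`i ≠ j`) are ergodic. -/
theorem stmt6 (m k : ℕ) (hm : 3 ≤ m)
    {X : Type*} [MeasurableSpace X] (μ : Measure X) [IsProbabilityMeasure μ]
    (T : (Fin m → ℝ) → X → X)
    (hmp : ∀ v, MeasurePreserving (T v) μ μ)
    (hT0 : T 0 = id) (hTadd : ∀ v w, T (v + w) = T v ∘ T w)
    (herg : ∀ A : Set X, MeasurableSet A → (∀ v, T v ⁻¹' A = A) → μ A = 0 ∨ μ A = 1)
    -- Pugh–Shub: off a countable family of hyperplanes through the origin, `T_v` is ergodic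
    (a : ℕ → (Fin m → ℝ)) (ha : ∀ i, a i ≠ 0)
    (hPS : ∀ v : Fin m → ℝ, v ∉ (⋃ i, {w : Fin m → ℝ | dotProduct (a i) w = 0}) →
      Ergodic (T v) μ)
    -- `S` is countably linear
    (S : Set (Matrix (Fin m) (Fin m) ℝ))
    (s : ℕ → Fin m → (Fin m → ℝ)) (c : ℕ → ℝ) (hs : ∀ r, ∃ l, s r l ≠ 0)
    (hScover : S ⊆ ⋃ r, {N : Matrix (Fin m) (Fin m) ℝ |
      ∑ l, dotProduct (s r l) (N.mulVec (Pi.single l 1)) = c r})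
    (u : Fin k → (Fin m → ℝ)) (hu : ∀ i, u i ≠ 0)
    (huij : ∀ i j, i ≠ j → u i ≠ u j) :
    ∃ M P : Matrix (Fin m) (Fin m) ℝ, M ∉ S ∧
      P ∈ Matrix.specialOrthogonalGroup (Fin m) ℝ ∧
      (M.transpose * P).transpose = -(M.transpose * P) ∧
      (∀ i, Ergodic (T (M.mulVec (u i))) μ) ∧
      (∀ i j, i ≠ j → Ergodic (T (M.mulVec (u i - u j))) μ) :=
  stmt6_general m k hm μ T a ha hPS S s c hs hScover u hu huij
end
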